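/- Let A be a symmetric cellular algebra over an integral domain R and let I^Λ = Σ_{λ: k_λ = 0} I^λ, where I^λ is the ideal spanned by elements C^λ_{S,V} D^λ_{V,U}. Then (I^Λ)² = 0. -/

import Mathlib

/-!
For a lower set `s ⊆ Λ`, the span of the `C m U V` with `m ∈ s` is a two-sided ideal (the right
ideal property comes from the anti-involution `ι`), so by the trace duality each of its elements
annihilates every `D ν U V` with `ν ∉ s`, from either side. As one of `l ≤ m`, `m ≤ l` fails when
`l ≠ m`, this kills `(C l S V * D l V U) * (C m S' V' * D m V' U')`. For `l = m`, reading off trace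
coefficients gives `D_{V,U} C_{S',V'} ≡ δ_{S',U} ∑_Q φ(V',Q) D_{V,Q}` modulo the `D`'s above `l`,
which `C_{S,V}` annihilates; with `D_{V,Q} D_{V',U'} ≡ ψ(Q,V') D_{V,U'}` and the symmetry of `φ`,
the product is `δ_{S',U} k_l • C_{S,V} D_{V,U'}`.
-/

section

open Submodule Set

variable {R A : Type*} [CommRing R] [Ring A] [Algebra R A] {Λ : Type*} {M : Λ → Type*}
  {C D : ∀ l, M l → M l → A} {τ : A →ₗ[R] R} {bD : Module.Basis ((l : Λ) × (M l × M l)) R A}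
  {ι : A →ₗ[R] A} {r : A → ∀ l, M l → M l → R} {Φ Ψ : ∀ l, M l → M l → R}

variable (R) in
def cellSpan (F : ∀ l, M l → M l → A) (s : Set Λ) : Submodule R A :=
  span R {x | ∃ m, ∃ U V : M m, m ∈ s ∧ x = F m U V}

theorem mem_cellSpan {F : ∀ l, M l → M l → A} {s : Set Λ} {m : Λ} (hm : m ∈ s) (U V : M m) :
    F m U V ∈ cellSpan R F s :=
  subset_span ⟨m, U, V, hm, rfl⟩

theorem cellSpan_mono {F : ∀ l, M l → M l → A} {s t : Set Λ} (h : s ⊆ t) :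
    cellSpan R F s ≤ cellSpan R F t :=
  span_mono fun _ ⟨m, U, V, hm, hx⟩ => ⟨m, U, V, h hm, hx⟩

theorem sigma_mk_eq_swap_iff {l m : Λ} {S T : M l} {U V : M m} :
    (⟨l, (S, T)⟩ : (l : Λ) × (M l × M l)) = ⟨m, (U, V)⟩ ↔
      (⟨m, (V, U)⟩ : (l : Λ) × (M l × M l)) = ⟨l, (T, S)⟩ := by
  constructor <;> rintro ⟨⟩ <;> rfl

section Duality

variable [DecidableEq Λ] [∀ l, DecidableEq (M l)]

def IsTraceDual (τ : A →ₗ[R] R) (C D : ∀ l, M l → M l → A) : Prop :=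
  ∀ l m (S T : M l) (U V : M m),
    τ (C l S T * D m U V) = if (⟨l, (S, T)⟩ : (l : Λ) × (M l × M l)) = ⟨m, (V, U)⟩ then 1 else 0

theorem tau_mul_D_eq_zero (hdual : IsTraceDual τ C D) {s : Set Λ} {y : A}
    (hy : y ∈ cellSpan R C s) {ν : Λ} (hν : ν ∉ s) (U V : M ν) : τ (y * D ν U V) = 0 := by
  suffices cellSpan R C s ≤ LinearMap.ker (τ ∘ₗ LinearMap.mulRight R (D ν U V)) from this hy
  refine span_le.2 ?_
  rintro _ ⟨m, S, T, hm, rfl⟩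
  have hne : (⟨m, (S, T)⟩ : (l : Λ) × (M l × M l)) ≠ ⟨ν, (V, U)⟩ :=
    fun h => hν (by obtain rfl : m = ν := congrArg Sigma.fst h; exact hm)
  simp [hdual m ν S T U V, hne]

theorem tau_C_mul_eq_repr (hbD : ∀ l S T, bD ⟨l, (S, T)⟩ = D l S T) (hdual : IsTraceDual τ C D)
    (w : A) (l : Λ) (P Q : M l) : τ (C l Q P * w) = bD.repr w ⟨l, (P, Q)⟩ := by
  have : τ ∘ₗ LinearMap.mulLeft R (C l Q P) =
      Finsupp.lapply ⟨l, (P, Q)⟩ ∘ₗ bD.repr.toLinearMap := by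
    refine bD.ext fun ⟨m, U, V⟩ => ?_
    rw [LinearMap.comp_apply, LinearMap.comp_apply, LinearEquiv.coe_coe, bD.repr_self,
      Finsupp.lapply_apply, Finsupp.single_apply, LinearMap.mulLeft_apply, hbD, hdual]
    exact if_congr sigma_mk_eq_swap_iff rfl rfl
  exact LinearMap.congr_fun this w

theorem mem_cellSpan_of_tau_C_mul_eq_zero (hbD : ∀ l S T, bD ⟨l, (S, T)⟩ = D l S T)
    (hdual : IsTraceDual τ C D) {t : Set Λ} {w : A}
    (hw : ∀ l ∉ t, ∀ P Q : M l, τ (C l P Q * w) = 0) : w ∈ cellSpan R D t := by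
  have hspan : {x | ∃ m, ∃ U V : M m, m ∈ t ∧ x = D m U V} = bD '' {i | i.1 ∈ t} := by
    ext x
    constructor
    · rintro ⟨m, U, V, hm, rfl⟩
      exact ⟨⟨m, U, V⟩, hm, hbD m U V⟩
    · rintro ⟨⟨m, U, V⟩, hm, rfl⟩
      exact ⟨m, U, V, hm, hbD m U V⟩
  rw [cellSpan, hspan, bD.mem_span_image]
  rintro ⟨l, P, Q⟩ hi
  by_contra hl
  exact Finsupp.mem_support_iff.1 hi (by rw [← tau_C_mul_eq_repr hbD hdual]; exact hw l hl Q P)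

theorem eq_zero_of_tau_C_mul_eq_zero (hbD : ∀ l S T, bD ⟨l, (S, T)⟩ = D l S T)
    (hdual : IsTraceDual τ C D) {w : A} (hw : ∀ l (P Q : M l), τ (C l P Q * w) = 0) : w = 0 :=
  bD.ext_elem fun ⟨l, P, Q⟩ => by rw [← tau_C_mul_eq_repr hbD hdual, hw, map_zero]; rfl

theorem eq_zero_of_smul_C_mem_cellSpan_Iio [Preorder Λ] (hdual : IsTraceDual τ C D) {c : R}
    {l : Λ} {S T : M l} (h : c • C l S T ∈ cellSpan R C (Iio l)) : c = 0 := by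
  have := tau_mul_D_eq_zero hdual h (lt_irrefl l) T S
  rwa [smul_mul_assoc, map_smul, hdual, if_pos rfl, smul_eq_mul, mul_one] at this

end Duality

section Ideal

variable [Preorder Λ]

theorem map_mem_cellSpan
    (hC2 : ∀ l (S T : M l), ι (C l S T) - C l T S ∈ cellSpan R C (Iio l))
    {s : Set Λ} (hs : IsLowerSet s) {y : A} (hy : y ∈ cellSpan R C s) :
    ι y ∈ cellSpan R C s := by
  suffices cellSpan R C s ≤ (cellSpan R C s).comap ι from this hy
  refine span_le.2 ?_
  rintro _ ⟨m, P, Q, hm, rfl⟩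
  have hlow : cellSpan R C (Iio m) ≤ cellSpan R C s :=
    cellSpan_mono (Iio_subset_Iic_self.trans (hs.Iic_subset hm))
  rw [SetLike.mem_coe, mem_comap, ← sub_add_cancel (ι (C m P Q)) (C m Q P)]
  exact add_mem (hlow (hC2 m P Q)) (mem_cellSpan hm Q P)

variable [∀ l, Fintype (M l)]

theorem mul_mem_cellSpan_left
    (hC3 : ∀ (a : A) l (S T : M l),
      a * C l S T - ∑ S', r a l S' S • C l S' T ∈ cellSpan R C (Iio l))
    {s : Set Λ} (hs : IsLowerSet s) (a : A) {y : A} (hy : y ∈ cellSpan R C s) :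
    a * y ∈ cellSpan R C s := by
  suffices cellSpan R C s ≤ (cellSpan R C s).comap (LinearMap.mulLeft R a) from this hy
  refine span_le.2 ?_
  rintro _ ⟨m, P, Q, hm, rfl⟩
  have hlow : cellSpan R C (Iio m) ≤ cellSpan R C s :=
    cellSpan_mono (Iio_subset_Iic_self.trans (hs.Iic_subset hm))
  rw [SetLike.mem_coe, mem_comap, LinearMap.mulLeft_apply,
    ← sub_add_cancel (a * C m P Q) (∑ S', r a m S' P • C m S' Q)]
  exact add_mem (hlow (hC3 a m P Q)) (sum_mem fun S' _ => smul_mem _ _ (mem_cellSpan hm S' Q))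

theorem mul_mem_cellSpan_right (hι2 : ∀ x, ι (ι x) = x) (hιmul : ∀ x y, ι (x * y) = ι y * ι x)
    (hC2 : ∀ l (S T : M l), ι (C l S T) - C l T S ∈ cellSpan R C (Iio l))
    (hC3 : ∀ (a : A) l (S T : M l),
      a * C l S T - ∑ S', r a l S' S • C l S' T ∈ cellSpan R C (Iio l))
    {s : Set Λ} (hs : IsLowerSet s) (a : A) {y : A} (hy : y ∈ cellSpan R C s) :
    y * a ∈ cellSpan R C s := by
  rw [← hι2 (y * a), hιmul]
  exact map_mem_cellSpan hC2 hs (mul_mem_cellSpan_left hC3 hs _ (map_mem_cellSpan hC2 hs hy))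

end Ideal

section Vanishing

variable [DecidableEq Λ] [∀ l, DecidableEq (M l)] [∀ l, Fintype (M l)] [Preorder Λ]

theorem mul_eq_zero_of_disjoint (hbD : ∀ l S T, bD ⟨l, (S, T)⟩ = D l S T)
    (hdual : IsTraceDual τ C D)
    (hC3 : ∀ (a : A) l (S T : M l),
      a * C l S T - ∑ S', r a l S' S • C l S' T ∈ cellSpan R C (Iio l))
    {s t : Set Λ} (hs : IsLowerSet s) (hst : Disjoint s t) {y h : A}
    (hy : y ∈ cellSpan R C s) (hh : h ∈ cellSpan R D t) : y * h = 0 := by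
  suffices cellSpan R D t ≤ LinearMap.ker (LinearMap.mulLeft R y) from this hh
  refine span_le.2 ?_
  rintro _ ⟨ν, U, V, hν, rfl⟩
  rw [SetLike.mem_coe, LinearMap.mem_ker, LinearMap.mulLeft_apply]
  refine eq_zero_of_tau_C_mul_eq_zero hbD hdual fun l P Q => ?_
  rw [← mul_assoc]
  exact tau_mul_D_eq_zero hdual (mul_mem_cellSpan_left hC3 hs _ hy) (disjoint_right.1 hst hν) U V

theorem D_mul_eq_zero_of_mem_cellSpan (hbD : ∀ l S T, bD ⟨l, (S, T)⟩ = D l S T)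
    (hdual : IsTraceDual τ C D) (hτtr : ∀ x y, τ (x * y) = τ (y * x))
    (hι2 : ∀ x, ι (ι x) = x) (hιmul : ∀ x y, ι (x * y) = ι y * ι x)
    (hC2 : ∀ l (S T : M l), ι (C l S T) - C l T S ∈ cellSpan R C (Iio l))
    (hC3 : ∀ (a : A) l (S T : M l),
      a * C l S T - ∑ S', r a l S' S • C l S' T ∈ cellSpan R C (Iio l))
    {s : Set Λ} (hs : IsLowerSet s) {y : A} (hy : y ∈ cellSpan R C s) {ν : Λ} (hν : ν ∉ s)
    (U V : M ν) : D ν U V * y = 0 := by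
  refine eq_zero_of_tau_C_mul_eq_zero hbD hdual fun l P Q => ?_
  rw [← mul_assoc, hτtr, ← mul_assoc]
  exact tau_mul_D_eq_zero hdual (mul_mem_cellSpan_right hι2 hιmul hC2 hC3 hs _ hy) hν U V

theorem cellForm_symm (hdual : IsTraceDual τ C D)
    (hι2 : ∀ x, ι (ι x) = x) (hιmul : ∀ x y, ι (x * y) = ι y * ι x)
    (hC2 : ∀ l (S T : M l), ι (C l S T) - C l T S ∈ cellSpan R C (Iio l))
    (hC3 : ∀ (a : A) l (S T : M l),
      a * C l S T - ∑ S', r a l S' S • C l S' T ∈ cellSpan R C (Iio l))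
    (hΦ : ∀ l (S T U V : M l), C l S T * C l U V - Φ l T U • C l S V ∈ cellSpan R C (Iio l))
    (l : Λ) (T U : M l) : Φ l T U = Φ l U T := by
  have hlow : IsLowerSet (Iio l) := isLowerSet_Iio l
  have h1 : ι (C l U U) * ι (C l T T) - Φ l T U • ι (C l T U) ∈ cellSpan R C (Iio l) := by
    simpa [hιmul] using map_mem_cellSpan hC2 hlow (hΦ l T T U U)
  have h2 : C l U U * C l T T - Φ l T U • C l U T ∈ cellSpan R C (Iio l) := by
    have e : C l U U * C l T T - Φ l T U • C l U T =
        (ι (C l U U) * ι (C l T T) - Φ l T U • ι (C l T U))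
          - (ι (C l U U) - C l U U) * ι (C l T T) - C l U U * (ι (C l T T) - C l T T)
          + Φ l T U • (ι (C l T U) - C l U T) := by
      rw [sub_mul, mul_sub, smul_sub]; abel
    rw [e]
    exact add_mem (sub_mem (sub_mem h1
      (mul_mem_cellSpan_right hι2 hιmul hC2 hC3 hlow _ (hC2 l U U)))
      (mul_mem_cellSpan_left hC3 hlow _ (hC2 l T T))) (smul_mem _ _ (hC2 l T U))
  refine (sub_eq_zero.1 (eq_zero_of_smul_C_mem_cellSpan_Iio hdual (S := U) (T := T) ?_)).symm
  convert sub_mem h2 (hΦ l U U T T) using 1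
  rw [sub_smul]; abel

end Vanishing

section Product

variable [DecidableEq Λ] [∀ l, DecidableEq (M l)] [∀ l, Fintype (M l)] [PartialOrder Λ]

theorem D_mul_C_sub_mem_cellSpan_Ioi (hbD : ∀ l S T, bD ⟨l, (S, T)⟩ = D l S T)
    (hdual : IsTraceDual τ C D) (hτtr : ∀ x y, τ (x * y) = τ (y * x))
    (hC3 : ∀ (a : A) l (S T : M l),
      a * C l S T - ∑ S', r a l S' S • C l S' T ∈ cellSpan R C (Iio l))
    (hΦ : ∀ l (S T U V : M l), C l S T * C l U V - Φ l T U • C l S V ∈ cellSpan R C (Iio l))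
    (l : Λ) (V U S T : M l) :
    D l V U * C l S T - (if S = U then ∑ Q, Φ l T Q • D l V Q else 0) ∈
      cellSpan R D (Ioi l) := by
  refine mem_cellSpan_of_tau_C_mul_eq_zero hbD hdual fun ν hν P Q => ?_
  rw [mul_sub, map_sub, ← mul_assoc, hτtr, ← mul_assoc, sub_eq_zero]
  rcases eq_or_ne ν l with rfl | hνl
  · rw [← sub_add_cancel (C ν S T * C ν P Q) (Φ ν T P • C ν S Q), add_mul, map_add,
      tau_mul_D_eq_zero hdual (hΦ ν S T P Q) (lt_irrefl ν) V U, zero_add]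
    split_ifs with hSU
    · subst hSU
      simp [Finset.mul_sum, hdual ν ν, ite_and]
    · simp [hdual ν ν, hSU]
  · have hlν : l ∉ Iic ν := fun h => hν (lt_of_le_of_ne h hνl.symm)
    rw [tau_mul_D_eq_zero hdual
      (mul_mem_cellSpan_left hC3 (isLowerSet_Iic ν) _
        (mem_cellSpan (F := C) (s := Iic ν) le_rfl P Q)) hlν]
    split_ifs
    · simp [Finset.mul_sum, hdual ν l, hνl]
    · simp

theorem cellProduct_mul_cellProduct_self (hbD : ∀ l S T, bD ⟨l, (S, T)⟩ = D l S T)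
    (hdual : IsTraceDual τ C D) (hτtr : ∀ x y, τ (x * y) = τ (y * x))
    (hC3 : ∀ (a : A) l (S T : M l),
      a * C l S T - ∑ S', r a l S' S • C l S' T ∈ cellSpan R C (Iio l))
    (hΦ : ∀ l (S T U V : M l), C l S T * C l U V - Φ l T U • C l S V ∈ cellSpan R C (Iio l))
    (hΨ : ∀ l (S T U V : M l), D l S T * D l U V - Ψ l T U • D l S V ∈ cellSpan R D (Ioi l))
    (l : Λ) (S V U S' V' U' : M l) :
    C l S V * D l V U * (C l S' V' * D l V' U') =
      if S' = U then (∑ Q, Φ l V' Q * Ψ l Q V') • (C l S V * D l V U') else 0 := by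
  have hkill : ∀ {h : A}, h ∈ cellSpan R D (Ioi l) → C l S V * h = 0 := fun hh =>
    mul_eq_zero_of_disjoint hbD hdual hC3 (isLowerSet_Iic l) (Iic_disjoint_Ioi le_rfl)
      (mem_cellSpan (F := C) (s := Iic l) le_rfl S V) hh
  have hDC : C l S V * (D l V U * C l S' V') =
      C l S V * (if S' = U then ∑ Q, Φ l V' Q • D l V Q else 0) := by
    rw [← sub_eq_zero, ← mul_sub]
    exact hkill (D_mul_C_sub_mem_cellSpan_Ioi hbD hdual hτtr hC3 hΦ l V U S' V')
  have hDD : ∀ Q, C l S V * (D l V Q * D l V' U') = Ψ l Q V' • (C l S V * D l V U') := by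
    intro Q
    rw [← mul_smul_comm, ← sub_eq_zero, ← mul_sub]
    exact hkill (hΨ l V Q V' U')
  calc C l S V * D l V U * (C l S' V' * D l V' U')
      = C l S V * (D l V U * C l S' V') * D l V' U' := by simp only [mul_assoc]
    _ = _ := by
      rw [hDC]
      split_ifs
      · simp only [Finset.mul_sum, Finset.sum_mul, Finset.sum_smul, mul_smul_comm, smul_mul_assoc,
          mul_assoc, hDD, smul_smul]
      · simp

theorem cellProduct_mul_cellProduct_eq_zero (hbD : ∀ l S T, bD ⟨l, (S, T)⟩ = D l S T)
    (hdual : IsTraceDual τ C D) (hτtr : ∀ x y, τ (x * y) = τ (y * x))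
    (hι2 : ∀ x, ι (ι x) = x) (hιmul : ∀ x y, ι (x * y) = ι y * ι x)
    (hC2 : ∀ l (S T : M l), ι (C l S T) - C l T S ∈ cellSpan R C (Iio l))
    (hC3 : ∀ (a : A) l (S T : M l),
      a * C l S T - ∑ S', r a l S' S • C l S' T ∈ cellSpan R C (Iio l))
    (hΦ : ∀ l (S T U V : M l), C l S T * C l U V - Φ l T U • C l S V ∈ cellSpan R C (Iio l))
    (hΨ : ∀ l (S T U V : M l), D l S T * D l U V - Ψ l T U • D l S V ∈ cellSpan R D (Ioi l))
    {l m : Λ} (hl : ∀ V : M l, ∑ X, Φ l X V * Ψ l X V = 0) (S U V : M l) (S' U' V' : M m) :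
    C l S V * D l V U * (C m S' V' * D m V' U') = 0 := by
  rcases eq_or_ne l m with rfl | hlm
  · have hsum : ∑ Q, Φ l V' Q * Ψ l Q V' = 0 := by
      rw [← hl V']
      exact Finset.sum_congr rfl fun Q _ => by rw [cellForm_symm hdual hι2 hιmul hC2 hC3 hΦ]
    rw [cellProduct_mul_cellProduct_self hbD hdual hτtr hC3 hΦ hΨ, hsum, zero_smul, ite_self]
  by_cases hml : m ≤ l
  · have hlm' : l ∉ Iic m := fun h => hlm (le_antisymm h hml)
    rw [mul_assoc, D_mul_eq_zero_of_mem_cellSpan hbD hdual hτtr hι2 hιmul hC2 hC3 (isLowerSet_Iic m)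
      (mul_mem_cellSpan_right hι2 hιmul hC2 hC3 (isLowerSet_Iic m) _
        (mem_cellSpan (F := C) (s := Iic m) le_rfl S' V')) hlm',
      mul_zero]
  · rw [← mul_assoc]
    exact mul_eq_zero_of_disjoint hbD hdual hC3 (isLowerSet_Iic l) (disjoint_singleton_right.2 hml)
      (mul_mem_cellSpan_right hι2 hιmul hC2 hC3 (isLowerSet_Iic l) _
        (mul_mem_cellSpan_right hι2 hιmul hC2 hC3 (isLowerSet_Iic l) _
          (mem_cellSpan (F := C) (s := Iic l) le_rfl S V)))
      (mem_cellSpan (F := D) (s := {m}) rfl V' U')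

end Product

end

theorem I_Lambda_squared_zero_general
    {R A : Type*} [CommRing R] [Ring A] [Algebra R A]
    {Λ : Type*} [PartialOrder Λ] [DecidableEq Λ]
    {M : Λ → Type*} [∀ l, Fintype (M l)] [∀ l, DecidableEq (M l)]
    (C D : ∀ l, M l → M l → A)
    (ι : A →ₗ[R] A)
    (hι2 : ∀ x, ι (ι x) = x)
    (hιmul : ∀ x y, ι (x * y) = ι y * ι x)
    (hC2 : ∀ l (S T : M l), ι (C l S T) - C l T S ∈
      Submodule.span R {x | ∃ m, ∃ U V : M m, m < l ∧ x = C m U V})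
    (r : A → ∀ l, M l → M l → R)
    (hC3 : ∀ (a : A) l (S T : M l), a * C l S T - ∑ S', r a l S' S • C l S' T ∈
      Submodule.span R {x | ∃ m, ∃ U V : M m, m < l ∧ x = C m U V})
    (τ : A →ₗ[R] R)
    (hτtr : ∀ x y, τ (x * y) = τ (y * x))
    (bD : Module.Basis ((l : Λ) × (M l × M l)) R A)
    (hbD : ∀ l S T, bD ⟨l, (S, T)⟩ = D l S T)
    (hdual : ∀ l m (S T : M l) (U V : M m),
      τ (C l S T * D m U V) =
        if (⟨l, (S, T)⟩ : (l : Λ) × (M l × M l)) = ⟨m, (V, U)⟩ then 1 else 0)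
    (Φ Ψ : ∀ l, M l → M l → R)
    (hΦ : ∀ l (S T U V : M l), C l S T * C l U V - Φ l T U • C l S V ∈
      Submodule.span R {x | ∃ m, ∃ U' V' : M m, m < l ∧ x = C m U' V'})
    (hΨ : ∀ l (S T U V : M l), D l S T * D l U V - Ψ l T U • D l S V ∈
      Submodule.span R {x | ∃ m, ∃ U' V' : M m, l < m ∧ x = D m U' V'})
    (k : Λ → R)
    (hk : ∀ l (V : M l), ∑ X : M l, Φ l X V * Ψ l X V = k l) :
    ∀ x ∈ (⨆ l ∈ {l : Λ | k l = 0},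
        Submodule.span R {x : A | ∃ S U V : M l, x = C l S V * D l V U}),
      ∀ y ∈ (⨆ l ∈ {l : Λ | k l = 0},
        Submodule.span R {x : A | ∃ S U V : M l, x = C l S V * D l V U}),
      x * y = 0 := by
  intro x hx y hy
  set J := ⨆ l ∈ {l : Λ | k l = 0},
    Submodule.span R {x : A | ∃ S U V : M l, x = C l S V * D l V U} with hJ
  suffices h : J * J = ⊥ from (Submodule.mem_bot R).1 (h ▸ Submodule.mul_mem_mul hx hy)
  simp only [hJ, Submodule.iSup_mul, Submodule.mul_iSup, Submodule.span_mul_span, iSup_eq_bot,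
    Submodule.span_eq_bot]
  rintro m - l hl _ ⟨_, ⟨S, U, V, rfl⟩, _, ⟨S', U', V', rfl⟩, rfl⟩
  exact cellProduct_mul_cellProduct_eq_zero hbD hdual hτtr hι2 hιmul hC2 hC3 hΦ hΨ
    (fun V => (hk l V).trans hl) S U V S' U' V'

/-- Part of Theorem 4.2(1): `(I^Λ)² = 0`, where `I^Λ` is the sum over all `l` with
`k l = 0` of the ideals spanned by the elements `C l S V * D l V U`. -/
theorem I_Lambda_squared_zero
    {R A : Type*} [CommRing R] [Ring A] [Algebra R A]
    {Λ : Type*} [PartialOrder Λ] [Fintype Λ] [DecidableEq Λ]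
    {M : Λ → Type*} [∀ l, Fintype (M l)] [∀ l, DecidableEq (M l)]
    (C D : ∀ l, M l → M l → A)
    (bC : Module.Basis ((l : Λ) × (M l × M l)) R A)
    (hbC : ∀ l S T, bC ⟨l, (S, T)⟩ = C l S T)
    (ι : A →ₗ[R] A)
    (hι2 : ∀ x, ι (ι x) = x)
    (hιmul : ∀ x y, ι (x * y) = ι y * ι x)
    (hC2 : ∀ l (S T : M l), ι (C l S T) - C l T S ∈
      Submodule.span R {x | ∃ m, ∃ U V : M m, m < l ∧ x = C m U V})
    (r : A → ∀ l, M l → M l → R)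
    (hC3 : ∀ (a : A) l (S T : M l), a * C l S T - ∑ S', r a l S' S • C l S' T ∈
      Submodule.span R {x | ∃ m, ∃ U V : M m, m < l ∧ x = C m U V})
    (τ : A →ₗ[R] R)
    (hτtr : ∀ x y, τ (x * y) = τ (y * x))
    (bD : Module.Basis ((l : Λ) × (M l × M l)) R A)
    (hbD : ∀ l S T, bD ⟨l, (S, T)⟩ = D l S T)
    (hdual : ∀ l m (S T : M l) (U V : M m),
      τ (C l S T * D m U V) =
        if (⟨l, (S, T)⟩ : (l : Λ) × (M l × M l)) = ⟨m, (V, U)⟩ then 1 else 0)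
    (Φ Ψ : ∀ l, M l → M l → R)
    (hΦ : ∀ l (S T U V : M l), C l S T * C l U V - Φ l T U • C l S V ∈
      Submodule.span R {x | ∃ m, ∃ U' V' : M m, m < l ∧ x = C m U' V'})
    (hΨ : ∀ l (S T U V : M l), D l S T * D l U V - Ψ l T U • D l S V ∈
      Submodule.span R {x | ∃ m, ∃ U' V' : M m, l < m ∧ x = D m U' V'})
    [IsDomain R]
    (k : Λ → R)
    (hk : ∀ l (V : M l), ∑ X : M l, Φ l X V * Ψ l X V = k l) :
    ∀ x ∈ (⨆ l ∈ {l : Λ | k l = 0},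
        Submodule.span R {x : A | ∃ S U V : M l, x = C l S V * D l V U}),
      ∀ y ∈ (⨆ l ∈ {l : Λ | k l = 0},
        Submodule.span R {x : A | ∃ S U V : M l, x = C l S V * D l V U}),
      x * y = 0 :=
  I_Lambda_squared_zero_general C D ι hι2 hιmul hC2 r hC3 τ hτtr bD hbD hdual Φ Ψ hΦ hΨ k hk
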